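/- arXiv:1407.3289 — 3 statements merged into one kernel-verified Lean document; each statement's English description precedes it below -/
import Mathlib

section
/- For every t ≥ 1 and δ ∈ (0,1), the Gaussian tails satisfy Φ(−t/√(1−δ)) ≤ C(δ) · t^{δ/(1−δ)} · Φ(−t)^{1/(1−δ)}, where C(δ) = 2^{1/(1−δ)} √(1−δ) · (2π)^{δ/(2(1−δ))}. -/
/-!
Both tails are compared with the Mills-ratio bound `m(s) = φ(s)/s`. On `(-∞, -s]` the
integrand `e^{-x²/2}` lies between `(1 + x⁻²) e^{-x²/2} / (1 + s⁻²)` and `-x e^{-x²/2} / s`,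
whose antiderivatives `-e^{-x²/2}/x` and `e^{-x²/2}` are explicit; this gives `Φ(-s) ≤ m(s)`
for `s > 0` and `m(t)/2 ≤ Φ(-t)` for `t ≥ 1`. Since `e^{-s²/2}` at `s = t/√(1-δ)` is
`(e^{-t²/2})^{1/(1-δ)}`, the constant `C(δ)` and the power of `t` are exactly what turns
`(m(t)/2)^{1/(1-δ)}` into `m(t/√(1-δ))`.
-/

open Real Set

/-- The standard Gaussian cumulative distribution function. -/
noncomputable def gaussCDF (t : ℝ) : ℝ :=
  ∫ x in Iic t, (1 / Real.sqrt (2 * π)) * Real.exp (-x ^ 2 / 2)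

open MeasureTheory Filter Topology

lemma integrable_exp_neg_sq_div_two : Integrable fun x : ℝ => exp (-x ^ 2 / 2) := by
  simpa [neg_div, div_eq_inv_mul] using integrable_exp_neg_mul_sq (b := 2⁻¹) (by norm_num)

lemma integrable_neg_mul_exp_neg_sq_div_two :
    Integrable fun x : ℝ => -x * exp (-x ^ 2 / 2) := by
  simpa [neg_div, div_eq_inv_mul] using
    (integrable_mul_exp_neg_mul_sq (b := 2⁻¹) (by norm_num)).neg

lemma tendsto_exp_neg_sq_div_two_atBot :
    Tendsto (fun x : ℝ => exp (-x ^ 2 / 2)) atBot (𝓝 0) := by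
  have hsq : Tendsto (fun x : ℝ => -x ^ 2 / 2) atBot atBot :=
    (tendsto_neg_atTop_atBot.comp (tendsto_id.atBot_mul_atBot₀ tendsto_id)).atBot_div_const
      two_pos |>.congr fun x => by simp [sq]
  exact tendsto_exp_atBot.comp hsq

lemma hasDerivAt_exp_neg_sq_div_two (x : ℝ) :
    HasDerivAt (fun y : ℝ => exp (-y ^ 2 / 2)) (-x * exp (-x ^ 2 / 2)) x := by
  have h : HasDerivAt (fun y : ℝ => -y ^ 2 / 2) (-x) x :=
    ((hasDerivAt_pow 2 x).neg.div_const 2).congr_deriv (by push_cast; ring)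
  simpa [mul_comm] using h.exp

lemma integral_Iic_neg_mul_exp_neg_sq_div_two (a : ℝ) :
    ∫ x in Iic a, -x * exp (-x ^ 2 / 2) = exp (-a ^ 2 / 2) := by
  simpa using integral_Iic_of_hasDerivAt_of_tendsto' (fun x _ => hasDerivAt_exp_neg_sq_div_two x)
    integrable_neg_mul_exp_neg_sq_div_two.integrableOn tendsto_exp_neg_sq_div_two_atBot

lemma integrableOn_Iic_one_add_inv_sq_mul_exp_neg_sq_div_two {a : ℝ} (ha : a < 0) :
    IntegrableOn (fun x : ℝ => (1 + x⁻¹ ^ 2) * exp (-x ^ 2 / 2)) (Iic a) := by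
  refine (integrable_exp_neg_sq_div_two.const_mul (1 + a⁻¹ ^ 2)).integrableOn.mono'
    (by fun_prop) ?_
  filter_upwards [ae_restrict_mem measurableSet_Iic] with x (hx : x ≤ a)
  rw [norm_of_nonneg (by positivity)]
  have : x⁻¹ ^ 2 ≤ a⁻¹ ^ 2 := by
    rw [inv_pow, inv_pow]
    exact inv_anti₀ (by nlinarith) (by nlinarith)
  gcongr

lemma integral_Iic_one_add_inv_sq_mul_exp_neg_sq_div_two {a : ℝ} (ha : a < 0) :
    ∫ x in Iic a, (1 + x⁻¹ ^ 2) * exp (-x ^ 2 / 2) = exp (-a ^ 2 / 2) / -a := by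
  have hderiv (x : ℝ) (hx : x ∈ Iic a) : HasDerivAt (fun y : ℝ => -exp (-y ^ 2 / 2) / y)
      ((1 + x⁻¹ ^ 2) * exp (-x ^ 2 / 2)) x := by
    have hx0 : x ≠ 0 := (lt_of_le_of_lt hx ha).ne
    refine ((hasDerivAt_exp_neg_sq_div_two x).neg.div (hasDerivAt_id' x) hx0).congr_deriv ?_
    simp only [Pi.neg_apply]
    field_simp
    ring
  have hlim : Tendsto (fun x : ℝ => -exp (-x ^ 2 / 2) / x) atBot (𝓝 0) := by
    simpa [div_eq_mul_inv] using tendsto_exp_neg_sq_div_two_atBot.neg.mul tendsto_inv_atBot_zero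
  rw [integral_Iic_of_hasDerivAt_of_tendsto' hderiv
    (integrableOn_Iic_one_add_inv_sq_mul_exp_neg_sq_div_two ha) hlim]
  ring

lemma setIntegral_Iic_neg_exp_neg_sq_div_two_le {s : ℝ} (hs : 0 < s) :
    ∫ x in Iic (-s), exp (-x ^ 2 / 2) ≤ exp (-s ^ 2 / 2) / s := by
  calc ∫ x in Iic (-s), exp (-x ^ 2 / 2)
      ≤ ∫ x in Iic (-s), s⁻¹ * (-x * exp (-x ^ 2 / 2)) := by
        refine setIntegral_mono_on integrable_exp_neg_sq_div_two.integrableOn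
          (integrable_neg_mul_exp_neg_sq_div_two.const_mul _).integrableOn measurableSet_Iic
          fun x (hx : x ≤ -s) => ?_
        rw [← mul_assoc, inv_mul_eq_div]
        exact le_mul_of_one_le_left (exp_pos _).le ((one_le_div hs).mpr (by linarith))
    _ = exp (-s ^ 2 / 2) / s := by
        rw [integral_const_mul, integral_Iic_neg_mul_exp_neg_sq_div_two, neg_sq, inv_mul_eq_div]

lemma div_one_add_sq_mul_exp_neg_sq_div_two_le_setIntegral_Iic_neg {s : ℝ} (hs : 0 < s) :
    s / (1 + s ^ 2) * exp (-s ^ 2 / 2) ≤ ∫ x in Iic (-s), exp (-x ^ 2 / 2) := by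
  calc s / (1 + s ^ 2) * exp (-s ^ 2 / 2)
      = (1 + s⁻¹ ^ 2)⁻¹ * ∫ x in Iic (-s), (1 + x⁻¹ ^ 2) * exp (-x ^ 2 / 2) := by
        rw [integral_Iic_one_add_inv_sq_mul_exp_neg_sq_div_two (by linarith), neg_sq, neg_neg]
        field_simp
        ring
    _ = ∫ x in Iic (-s), (1 + s⁻¹ ^ 2)⁻¹ * ((1 + x⁻¹ ^ 2) * exp (-x ^ 2 / 2)) :=
        (integral_const_mul _ _).symm
    _ ≤ ∫ x in Iic (-s), exp (-x ^ 2 / 2) := by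
        refine setIntegral_mono_on
          ((integrableOn_Iic_one_add_inv_sq_mul_exp_neg_sq_div_two (by linarith)).const_mul _)
          integrable_exp_neg_sq_div_two.integrableOn measurableSet_Iic fun x (hx : x ≤ -s) => ?_
        have : x⁻¹ ^ 2 ≤ s⁻¹ ^ 2 := by
          rw [inv_pow, inv_pow]
          exact inv_anti₀ (by positivity) (by nlinarith)
        rw [← mul_assoc, inv_mul_eq_div]
        exact mul_le_of_le_one_left (exp_pos _).le ((div_le_one (by positivity)).mpr (by linarith))

noncomputable def millsBound (s : ℝ) : ℝ := exp (-s ^ 2 / 2) / (s * √(2 * π))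

lemma gaussCDF_eq_mul_integral (a : ℝ) :
    gaussCDF a = 1 / √(2 * π) * ∫ x in Iic a, exp (-x ^ 2 / 2) :=
  integral_const_mul _ _

lemma gaussCDF_neg_le_millsBound {s : ℝ} (hs : 0 < s) : gaussCDF (-s) ≤ millsBound s := by
  rw [gaussCDF_eq_mul_integral, millsBound]
  calc 1 / √(2 * π) * ∫ x in Iic (-s), exp (-x ^ 2 / 2)
      ≤ 1 / √(2 * π) * (exp (-s ^ 2 / 2) / s) := by
        gcongr
        exact setIntegral_Iic_neg_exp_neg_sq_div_two_le hs
    _ = exp (-s ^ 2 / 2) / (s * √(2 * π)) := by ring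

lemma millsBound_div_two_le_gaussCDF_neg {t : ℝ} (ht : 1 ≤ t) :
    millsBound t / 2 ≤ gaussCDF (-t) := by
  have ht0 : 0 < t := by linarith
  have hcoeff : 1 / (2 * t) ≤ t / (1 + t ^ 2) := by
    rw [div_le_div_iff₀ (by positivity) (by positivity)]
    nlinarith
  rw [gaussCDF_eq_mul_integral, millsBound]
  calc exp (-t ^ 2 / 2) / (t * √(2 * π)) / 2
      = 1 / √(2 * π) * (1 / (2 * t) * exp (-t ^ 2 / 2)) := by ring
    _ ≤ 1 / √(2 * π) * (t / (1 + t ^ 2) * exp (-t ^ 2 / 2)) := by gcongr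
    _ ≤ 1 / √(2 * π) * ∫ x in Iic (-t), exp (-x ^ 2 / 2) := by
        gcongr
        exact div_one_add_sq_mul_exp_neg_sq_div_two_le_setIntegral_Iic_neg ht0

lemma altitude_constant_mul_rpow_millsBound {t δ : ℝ} (ht : 0 < t) (hδ : δ < 1) :
    ((2 : ℝ) ^ (1 / (1 - δ)) * √(1 - δ) * (2 * π) ^ (δ / (2 * (1 - δ)))) *
        t ^ (δ / (1 - δ)) * (millsBound t / 2) ^ (1 / (1 - δ)) =
      millsBound (t / √(1 - δ)) := by
  set q := 1 / (1 - δ) with hq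
  have ha : 0 < 1 - δ := by linarith
  have h2π : 0 < 2 * π := by positivity
  have hexp_t : δ / (1 - δ) = q - 1 := by rw [hq]; field_simp; ring
  have hexp_2π : δ / (2 * (1 - δ)) = q / 2 - 1 / 2 := by rw [hq]; field_simp; ring
  have hsq : -(t / √(1 - δ)) ^ 2 / 2 = -t ^ 2 / 2 * q := by
    rw [div_pow, sq_sqrt ha.le, hq]; ring
  have hrpow : (millsBound t / 2) ^ q
      = exp (-t ^ 2 / 2 * q) / (t ^ q * (2 * π) ^ (q / 2) * 2 ^ q) := by
    rw [millsBound, div_div, div_rpow (exp_pos _).le (by positivity), ← exp_mul,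
      mul_rpow (by positivity) (by positivity), mul_rpow ht.le (by positivity), sqrt_eq_rpow,
      ← rpow_mul h2π.le]
    ring_nf
  rw [hrpow, hexp_t, hexp_2π, rpow_sub ht, rpow_sub h2π, rpow_one, ← sqrt_eq_rpow, millsBound,
    hsq]
  field_simp

theorem altitude_training_tail_inequality_general (t δ : ℝ) (ht : 1 ≤ t) (hδ1 : δ < 1) :
    gaussCDF (-(t / Real.sqrt (1 - δ))) ≤
      ((2 : ℝ) ^ (1 / (1 - δ)) * Real.sqrt (1 - δ) * (2 * π) ^ (δ / (2 * (1 - δ)))) *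
        t ^ (δ / (1 - δ)) * gaussCDF (-t) ^ (1 / (1 - δ)) := by
  have ht0 : 0 < t := by linarith
  have hmills : 0 ≤ millsBound t / 2 := by rw [millsBound]; positivity
  calc gaussCDF (-(t / √(1 - δ)))
      ≤ millsBound (t / √(1 - δ)) := gaussCDF_neg_le_millsBound (by positivity)
    _ = ((2 : ℝ) ^ (1 / (1 - δ)) * √(1 - δ) * (2 * π) ^ (δ / (2 * (1 - δ)))) *
        t ^ (δ / (1 - δ)) * (millsBound t / 2) ^ (1 / (1 - δ)) :=
        (altitude_constant_mul_rpow_millsBound ht0 hδ1).symm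
    _ ≤ ((2 : ℝ) ^ (1 / (1 - δ)) * √(1 - δ) * (2 * π) ^ (δ / (2 * (1 - δ)))) *
        t ^ (δ / (1 - δ)) * gaussCDF (-t) ^ (1 / (1 - δ)) := by
        gcongr
        exact millsBound_div_two_le_gaussCDF_neg ht

/-- The altitude-training inequality: for `t ≥ 1` and `δ ∈ (0,1)`,
`Φ(−t/√(1−δ)) ≤ C(δ) · t^{δ/(1−δ)} · Φ(−t)^{1/(1−δ)}` with
`C(δ) = 2^{1/(1−δ)} √(1−δ) (2π)^{δ/(2(1−δ))}`. -/
theorem altitude_training_tail_inequality (t δ : ℝ) (ht : 1 ≤ t) (hδ0 : 0 < δ) (hδ1 : δ < 1) :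
    gaussCDF (-(t / Real.sqrt (1 - δ))) ≤
      ((2 : ℝ) ^ (1 / (1 - δ)) * Real.sqrt (1 - δ) * (2 * π) ^ (δ / (2 * (1 - δ)))) *
        t ^ (δ / (1 - δ)) * gaussCDF (-t) ^ (1 / (1 - δ)) :=
  altitude_training_tail_inequality_general t δ ht hδ1
end

section
/- In the Poisson topic model where the expected document length ‖λ^{(τ)}‖₁ = λ is independent of topic τ, let x̃ be obtained from x by binomial dropout with rate δ ∈ (0,1) (each coordinate x̃_j ~ Binomial(x_j, 1−δ) independently). Then for every v ∈ ℕ^d, P(y = 1 | x̃ = v) = P(y = 1 | x = v). -/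
/-- Joint probability that the topic-conditional independent-Poisson document
equals `v`: `∏_j e^{−λ_j} λ_j^{v_j} / v_j!`. -/
noncomputable def poissonLik {d : ℕ} (lam : Fin d → ℝ) (v : Fin d → ℕ) : ℝ :=
  ∏ j, Real.exp (-lam j) * lam j ^ (v j) / ((v j).factorial : ℝ)

/-- Probability that the binomial-dropout corruption (rate `δ`) of the
topic-conditional Poisson document equals `v`. -/
noncomputable def dropoutLik {d : ℕ} (lam : Fin d → ℝ) (δ : ℝ) (v : Fin d → ℕ) : ℝ :=
  ∑' u : Fin d → ℕ,
    poissonLik lam u * ∏ j, ((u j).choose (v j) : ℝ) * (1 - δ) ^ (v j) * δ ^ (u j - v j)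

/-- Marginal probability of observing a document `v` with label `c`, for a
given per-topic likelihood `lik`: prior of `c` times the topic mixture of the
likelihood. -/
noncomputable def classJoint {Θ : Type*} {d : ℕ} (py : Bool → ℝ) (ρ : Bool → Θ → ℝ)
    (lik : Θ → (Fin d → ℕ) → ℝ) (c : Bool) (v : Fin d → ℕ) : ℝ :=
  py c * ∑' τ : Θ, ρ c τ * lik τ v

/-!
Binomial thinning of a Poisson(λ) count with keep probability `1 - δ` is Poisson((1 - δ)λ),
so the dropout likelihood of a document `v` under a topic equals its Poisson likelihood times
`e^{δ‖λ‖₁} (1 - δ)^{|v|}`. When `‖λ‖₁` does not depend on the topic, this factor is the same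
for every topic and both classes, and it cancels from the posterior.
-/

open scoped Nat

lemma hasSum_pow_div_factorial_mul_choose (x p q : ℝ) (k : ℕ) :
    HasSum (fun n : ℕ => x ^ n / n ! * (n.choose k * p ^ k * q ^ (n - k)))
      ((p * x) ^ k / k ! * Real.exp (q * x)) := by
  -- The terms with `n < k` vanish; reindexed by `n = m + k` the series is
  -- `(p x)^k / k!` times the exponential series of `q x`.
  have hinj : Function.Injective (· + k) := add_left_injective k
  rw [← hinj.hasSum_iff fun n hn => ?_]
  · have hexp : HasSum (fun m : ℕ => (q * x) ^ m / m !) (Real.exp (q * x)) := by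
      rw [Real.exp_eq_exp_ℝ]
      exact NormedSpace.expSeries_div_hasSum_exp (q * x)
    refine (hexp.mul_left _).congr_fun fun m => ?_
    simp only [Function.comp_apply, Nat.add_sub_cancel, Nat.cast_choose ℝ (Nat.le_add_left k m)]
    field_simp
    ring
  · have hnk : n < k := by
      by_contra h
      exact hn ⟨n - k, Nat.sub_add_cancel (not_lt.mp h)⟩
    simp [Nat.choose_eq_zero_of_lt hnk]

lemma hasSum_prod_pi_of_nonneg {d : ℕ} {κ : Fin d → Type*} (f : ∀ j, κ j → ℝ) (a : Fin d → ℝ)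
    (hf₀ : ∀ j n, 0 ≤ f j n) (hf : ∀ j, HasSum (f j) (a j)) :
    HasSum (fun u : ∀ j, κ j => ∏ j, f j (u j)) (∏ j, a j) := by
  induction d with
  | zero => simp
  | succ d ih =>
    have htail := ih (fun j => f j.succ) (fun j => a j.succ)
      (fun j => hf₀ j.succ) (fun j => hf j.succ)
    have hhead₀ : 0 ≤ f 0 := hf₀ 0
    have htail₀ : 0 ≤ fun u : ∀ j : Fin d, κ j.succ => ∏ j : Fin d, f j.succ (u j) :=
      fun u => Finset.prod_nonneg fun j _ => hf₀ j.succ (u j)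
    have hsummable := (hf 0).summable.mul_of_nonneg htail.summable hhead₀ htail₀
    rw [← (Fin.consEquiv κ).hasSum_iff, Fin.prod_univ_succ]
    exact ((hf 0).mul htail hsummable).congr_fun fun u => Fin.prod_univ_succ _

lemma dropoutLik_eq_mul_poissonLik {d : ℕ} (lam : Fin d → ℝ) (hlam : ∀ j, 0 ≤ lam j)
    {δ : ℝ} (hδ₀ : 0 ≤ δ) (hδ₁ : δ ≤ 1) (v : Fin d → ℕ) :
    dropoutLik lam δ v =
      Real.exp (δ * ∑ j, lam j) * (1 - δ) ^ (∑ j, v j) * poissonLik lam v := by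
  have hthin := hasSum_prod_pi_of_nonneg
    (fun j n => Real.exp (-lam j) * (lam j ^ n / n ! *
      (n.choose (v j) * (1 - δ) ^ (v j) * δ ^ (n - v j))))
    _ (fun j n => by have := hlam j; positivity)
    fun j => (hasSum_pow_div_factorial_mul_choose (lam j) (1 - δ) δ (v j)).mul_left _
  calc dropoutLik lam δ v
      = ∑' u : Fin d → ℕ, ∏ j, Real.exp (-lam j) * (lam j ^ u j / (u j) ! *
          ((u j).choose (v j) * (1 - δ) ^ (v j) * δ ^ (u j - v j))) := by
        refine tsum_congr fun u => ?_
        rw [poissonLik, ← Finset.prod_mul_distrib]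
        exact Finset.prod_congr rfl fun j _ => by ring
    _ = ∏ j, Real.exp (-lam j) * (((1 - δ) * lam j) ^ v j / (v j) ! * Real.exp (δ * lam j)) :=
        hthin.tsum_eq
    _ = Real.exp (δ * ∑ j, lam j) * (1 - δ) ^ (∑ j, v j) * poissonLik lam v := by
        simp only [poissonLik, Finset.mul_sum, Real.exp_sum, ← Finset.prod_pow_eq_pow_sum,
          ← Finset.prod_mul_distrib]
        refine Finset.prod_congr rfl fun j _ => ?_
        rw [mul_pow]
        ring

lemma classJoint_eq_const_mul {Θ : Type*} {d : ℕ} (py : Bool → ℝ) (ρ : Bool → Θ → ℝ)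
    {lik lik' : Θ → (Fin d → ℕ) → ℝ} {v : Fin d → ℕ} {K : ℝ}
    (h : ∀ τ, lik' τ v = K * lik τ v) (c : Bool) :
    classJoint py ρ lik' c v = K * classJoint py ρ lik c v := by
  simp only [classJoint, h, mul_left_comm _ K, tsum_mul_left]

theorem dropout_preserves_bayes_boundary_general
    {Θ : Type*} (d : ℕ)
    (lam : Θ → Fin d → ℝ) (hlam : ∀ τ j, 0 ≤ lam τ j)
    (Λ : ℝ) (hlen : ∀ τ, ∑ j, lam τ j = Λ)
    (δ : ℝ) (hδ0 : 0 < δ) (hδ1 : δ < 1)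
    (py : Bool → ℝ)
    (ρ : Bool → Θ → ℝ)
    (v : Fin d → ℕ) :
    classJoint py ρ (fun τ => dropoutLik (lam τ) δ) true v /
        (classJoint py ρ (fun τ => dropoutLik (lam τ) δ) true v +
          classJoint py ρ (fun τ => dropoutLik (lam τ) δ) false v) =
      classJoint py ρ (fun τ => poissonLik (lam τ)) true v /
        (classJoint py ρ (fun τ => poissonLik (lam τ)) true v +
          classJoint py ρ (fun τ => poissonLik (lam τ)) false v) := by
  have hthin (τ : Θ) : dropoutLik (lam τ) δ v =
      Real.exp (δ * Λ) * (1 - δ) ^ (∑ j, v j) * poissonLik (lam τ) v := by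
    rw [dropoutLik_eq_mul_poissonLik (lam τ) (hlam τ) hδ0.le hδ1.le, hlen τ]
  have hK : Real.exp (δ * Λ) * (1 - δ) ^ (∑ j, v j) ≠ 0 :=
    mul_ne_zero (Real.exp_ne_zero _) (pow_ne_zero _ (sub_ne_zero.mpr hδ1.ne'))
  simp only [classJoint_eq_const_mul py ρ hthin, ← mul_add, mul_div_mul_left _ _ hK]

/-- Dropout preserves the Bayes decision boundary in the Poisson topic model:
if the expected document length `‖λ^{(τ)}‖₁` is the same for every topic `τ`,
then for every count vector `v`, `P(y = 1 ∣ x̃ = v) = P(y = 1 ∣ x = v)`, where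
`x̃` is the binomial-dropout corruption of `x` with rate `δ ∈ (0,1)`. -/
theorem dropout_preserves_bayes_boundary
    {Θ : Type*} [Countable Θ] (d : ℕ)
    (lam : Θ → Fin d → ℝ) (hlam : ∀ τ j, 0 ≤ lam τ j)
    (Λ : ℝ) (hΛpos : 0 < Λ) (hlen : ∀ τ, ∑ j, lam τ j = Λ)
    (δ : ℝ) (hδ0 : 0 < δ) (hδ1 : δ < 1)
    (py : Bool → ℝ) (hpy : ∀ c, 0 ≤ py c) (hpy1 : py true + py false = 1)
    (ρ : Bool → Θ → ℝ) (hρ0 : ∀ c τ, 0 ≤ ρ c τ) (hρ1 : ∀ c, ∑' τ : Θ, ρ c τ = 1)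
    (v : Fin d → ℕ)
    (hden : 0 < classJoint py ρ (fun τ => poissonLik (lam τ)) true v +
        classJoint py ρ (fun τ => poissonLik (lam τ)) false v)
    (hdent : 0 < classJoint py ρ (fun τ => dropoutLik (lam τ) δ) true v +
        classJoint py ρ (fun τ => dropoutLik (lam τ) δ) false v) :
    classJoint py ρ (fun τ => dropoutLik (lam τ) δ) true v /
        (classJoint py ρ (fun τ => dropoutLik (lam τ) δ) true v +
          classJoint py ρ (fun τ => dropoutLik (lam τ) δ) false v) =
      classJoint py ρ (fun τ => poissonLik (lam τ)) true v /
        (classJoint py ρ (fun τ => poissonLik (lam τ)) true v +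
          classJoint py ρ (fun τ => poissonLik (lam τ)) false v) :=
  dropout_preserves_bayes_boundary_general d lam hlam Λ hlen δ hδ0 hδ1 py ρ v
end

section
/- Let S = Σ_j w_j Z_j with Z_j independent Poisson(λ_j), μ = E[S] > 0, σ² = Var(S) > 0, and let S̃ = Σ_j w_j Z̃_j with Z̃_j independent Poisson((1−δ)λ_j). If P(S̃ ≤ 0) ≥ Φ(−√(1−δ)·μ/σ) − C/√(1−δ)·√Ψ and P(S ≤ 0) ≤ Φ(−μ/σ) + C·√Ψ hold with Ψ = max_j w_j² / Σ_j λ_j w_j² and C = 4 (Berry–Esseen), then whenever P(S̃ ≤ 0) + (C/√(1−δ))√Ψ ≤ Φ(−1), one has P(S ≤ 0) ≤ K(δ)·(−log(P(S̃≤0) + (C/√(1−δ))√Ψ))^{δ/(2(1−δ))} · (P(S̃≤0) + (C/√(1−δ))√Ψ)^{1/(1−δ)} + C√Ψ, where K(δ) = 2^{1/(1−δ)}√(1−δ)·(2π)^{δ/(2(1−δ))}. -/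
/-!
Write `φ` for the standard Gaussian density, `t = m/σ`, `s = √(1-δ) t`, `A = δ/(2(1-δ))` and
`q = P(S̃ ≤ 0) + (4/√(1-δ))√Ψ`. The Berry–Esseen inequalities reduce the claim to
`Φ(-t) ≤ K(δ) (-log q)^A q^(1/(1-δ))` under `Φ(-s) ≤ q ≤ Φ(-1)`, which forces `s ≥ 1`.
Since `t² = s²/(1-δ)`, one has `φ t = φ s · exp(-s²)^A`. The Mills-ratio bounds
`s/(1+s²) φ s ≤ Φ(-s) ≤ φ s / s` give, for `p = Φ(-s)`, both `Φ(-t) ≤ 2√(1-δ) p exp(-s²)^A` and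
`exp(-s²) ≤ 8π (-log p) p²`, whence `Φ(-t) ≤ K(δ) (-log p)^A p^(1/(1-δ))`. Finally
`x ↦ (-log x)^A x^(1/(1-δ))` is a power of `x ↦ -x^γ log x^γ` with `γ ≥ 1`, hence increasing on
`(0, e⁻¹]`, so `p` may be replaced by `q ≥ p`.
-/

open ProbabilityTheory MeasureTheory Finset Real Set
open scoped NNReal

open Filter Topology

local notation "φ" => gaussianPDFReal 0 1

lemma gaussianPDFReal_zero_one : φ = fun x => (√(2 * π))⁻¹ * exp (-x ^ 2 / 2) := by
  ext x; simp [gaussianPDFReal]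

lemma gaussCDF_eq_integral (t : ℝ) : gaussCDF t = ∫ x in Iic t, φ x := by
  simp [gaussCDF, gaussianPDFReal_zero_one]

lemma gaussianPDFReal_zero_one_neg (x : ℝ) : φ (-x) = φ x := by
  simp [gaussianPDFReal_zero_one]

lemma hasDerivAt_gaussianPDFReal_zero_one (x : ℝ) : HasDerivAt φ (-x * φ x) x := by
  have h : HasDerivAt (fun y : ℝ => -y ^ 2 / 2) (-x) x := by
    simpa using ((hasDerivAt_pow 2 x).neg.div_const 2).congr_deriv (by ring)
  rw [gaussianPDFReal_zero_one]
  exact (h.exp.const_mul _).congr_deriv (by ring)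

lemma tendsto_gaussianPDFReal_zero_one_atBot : Tendsto φ atBot (𝓝 0) := by
  have h : Tendsto (fun x : ℝ => -x ^ 2 / 2) atBot atBot := by
    refine Tendsto.atBot_div_const two_pos (tendsto_neg_atTop_atBot.comp ?_)
    simpa only [sq, id] using tendsto_id.atBot_mul_atBot₀ (tendsto_id (x := (atBot : Filter ℝ)))
  rw [gaussianPDFReal_zero_one]
  simpa using (tendsto_exp_atBot.comp h).const_mul (√(2 * π))⁻¹

lemma integrable_neg_mul_gaussianPDFReal_zero_one : Integrable fun x => -x * φ x := by
  refine ((integrable_mul_exp_neg_mul_sq (b := 1 / 2) (by norm_num)).const_mul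
    (-(√(2 * π))⁻¹)).congr (Eventually.of_forall fun x => ?_)
  simp only [gaussianPDFReal_zero_one]
  ring_nf

lemma integral_Iic_neg_mul_gaussianPDFReal_zero_one (a : ℝ) :
    ∫ x in Iic a, -x * φ x = φ a := by
  simpa using integral_Iic_of_hasDerivAt_of_tendsto'
    (fun x _ => hasDerivAt_gaussianPDFReal_zero_one x)
    integrable_neg_mul_gaussianPDFReal_zero_one.integrableOn
    tendsto_gaussianPDFReal_zero_one_atBot

lemma setIntegral_gaussianPDFReal_zero_one_pos {s : Set ℝ} (hs : volume s ≠ 0) :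
    0 < ∫ x in s, φ x := by
  rw [setIntegral_pos_iff_support_of_nonneg_ae (ae_of_all _ (gaussianPDFReal_nonneg 0 1))
    (integrable_gaussianPDFReal 0 1).integrableOn]
  have hsupp : Function.support φ = univ :=
    eq_univ_of_forall fun x => (gaussianPDFReal_pos 0 1 x one_ne_zero).ne'
  simpa [hsupp, pos_iff_ne_zero] using hs

lemma gaussCDF_pos (t : ℝ) : 0 < gaussCDF t := by
  rw [gaussCDF_eq_integral]
  exact setIntegral_gaussianPDFReal_zero_one_pos (by simp)

lemma gaussCDF_strictMono : StrictMono gaussCDF := by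
  intro a b hab
  have hsplit : gaussCDF b = gaussCDF a + ∫ x in Ioc a b, φ x := by
    simp only [gaussCDF_eq_integral]
    rw [← setIntegral_union (Iic_disjoint_Ioc le_rfl) measurableSet_Ioc
      (integrable_gaussianPDFReal 0 1).integrableOn (integrable_gaussianPDFReal 0 1).integrableOn,
      Iic_union_Ioc_eq_Iic hab.le]
  linarith [setIntegral_gaussianPDFReal_zero_one_pos (s := Ioc a b) (by simp [hab])]

lemma gaussCDF_neg_le_div {t : ℝ} (ht : 0 < t) : gaussCDF (-t) ≤ φ t / t := by
  rw [gaussCDF_eq_integral, div_eq_inv_mul, ← gaussianPDFReal_zero_one_neg,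
    ← integral_Iic_neg_mul_gaussianPDFReal_zero_one, ← integral_const_mul]
  refine setIntegral_mono_on (integrable_gaussianPDFReal 0 1).integrableOn
    (integrable_neg_mul_gaussianPDFReal_zero_one.const_mul _).integrableOn measurableSet_Iic
    fun x hx => ?_
  have hx : 1 ≤ t⁻¹ * -x := by
    rw [← div_eq_inv_mul, le_div_iff₀ ht]; linarith [mem_Iic.mp hx]
  nlinarith [gaussianPDFReal_nonneg 0 1 x]

lemma div_one_add_sq_mul_le_gaussCDF_neg {s : ℝ} (hs : 0 < s) :
    s / (1 + s ^ 2) * φ s ≤ gaussCDF (-s) := by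
  set f' : ℝ → ℝ := fun x => φ x * (1 + (x ^ 2)⁻¹)
  have hderiv : ∀ x ∈ Iic (-s), HasDerivAt (fun x => φ x * -x⁻¹) (f' x) x := by
    intro x hx
    have hx0 : x ≠ 0 := by linarith [mem_Iic.mp hx]
    refine ((hasDerivAt_gaussianPDFReal_zero_one x).mul (hasDerivAt_inv hx0).neg).congr_deriv ?_
    simp only [f', Pi.neg_apply]
    field_simp
  have hbound : ∀ x ∈ Iic (-s), f' x ≤ (1 + (s ^ 2)⁻¹) * φ x := by
    intro x hx
    have hsx : s ^ 2 ≤ x ^ 2 := by nlinarith [mem_Iic.mp hx]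
    have := inv_anti₀ (by positivity) hsx
    nlinarith [gaussianPDFReal_nonneg 0 1 x]
  have hdom : IntegrableOn (fun x => (1 + (s ^ 2)⁻¹) * φ x) (Iic (-s)) :=
    (integrable_gaussianPDFReal 0 1).integrableOn.const_mul _
  have hint : IntegrableOn f' (Iic (-s)) := by
    refine hdom.mono'
      ((measurable_gaussianPDFReal 0 1).mul (by fun_prop)).aestronglyMeasurable ?_
    refine (ae_restrict_iff' measurableSet_Iic).mpr (Eventually.of_forall fun x hx => ?_)
    rw [Real.norm_of_nonneg (mul_nonneg (gaussianPDFReal_nonneg 0 1 x) (by positivity))]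
    exact hbound x hx
  have hlim : Tendsto (fun x => φ x * -x⁻¹) atBot (𝓝 0) := by
    simpa using tendsto_gaussianPDFReal_zero_one_atBot.mul tendsto_inv_atBot_zero.neg
  have hftc := integral_Iic_of_hasDerivAt_of_tendsto' hderiv hint hlim
  have hmono : ∫ x in Iic (-s), f' x ≤ (1 + (s ^ 2)⁻¹) * gaussCDF (-s) := by
    rw [gaussCDF_eq_integral, ← integral_const_mul]
    exact setIntegral_mono_on hint hdom measurableSet_Iic hbound
  rw [hftc, gaussianPDFReal_zero_one_neg] at hmono
  rw [div_mul_eq_mul_div, div_le_iff₀ (by positivity)]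
  field_simp at hmono
  nlinarith

lemma gaussianPDFReal_zero_one_le_exp (x : ℝ) : φ x ≤ exp (-(1 + x ^ 2) / 2) := by
  have hconst : (√(2 * π))⁻¹ ≤ exp (-(1 / 2)) := by
    rw [exp_neg, inv_le_inv₀ (sqrt_pos.mpr (by positivity)) (exp_pos _), le_sqrt' (exp_pos _),
      ← exp_nat_mul]
    norm_num
    nlinarith [exp_one_lt_d9, pi_gt_three]
  rw [gaussianPDFReal_zero_one, show -(1 + x ^ 2) / 2 = -(1 / 2) + -x ^ 2 / 2 by ring, exp_add]
  exact mul_le_mul_of_nonneg_right hconst (exp_pos _).le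

lemma gaussCDF_neg_one_le_exp_neg_one : gaussCDF (-1) ≤ exp (-1) := by
  have h := (gaussCDF_neg_le_div one_pos).trans_eq (div_one _) |>.trans
    (gaussianPDFReal_zero_one_le_exp 1)
  norm_num at h ⊢
  exact h

lemma gaussianPDFReal_zero_one_le_two_mul_gaussCDF_neg {s : ℝ} (hs : 1 ≤ s) :
    φ s ≤ 2 * s * gaussCDF (-s) := by
  have hs0 : 0 < s := zero_lt_one.trans_le hs
  have h := div_one_add_sq_mul_le_gaussCDF_neg hs0
  rw [div_mul_eq_mul_div, div_le_iff₀ (by positivity)] at h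
  refine le_of_mul_le_mul_left (h.trans ?_) hs0
  nlinarith [mul_le_mul_of_nonneg_right (one_le_pow₀ hs : 1 ≤ s ^ 2) (gaussCDF_pos (-s)).le]

lemma one_add_sq_div_two_le_neg_log_gaussCDF_neg {s : ℝ} (hs : 1 ≤ s) :
    (1 + s ^ 2) / 2 ≤ -log (gaussCDF (-s)) := by
  have hpφ : gaussCDF (-s) ≤ φ s :=
    (gaussCDF_neg_le_div (zero_lt_one.trans_le hs)).trans
      (div_le_self (gaussianPDFReal_nonneg 0 1 s) hs)
  have := log_le_log (gaussCDF_pos _) (hpφ.trans (gaussianPDFReal_zero_one_le_exp s))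
  rw [log_exp] at this
  linarith

lemma exp_neg_sq_le_neg_log_gaussCDF_neg_mul {s : ℝ} (hs : 1 ≤ s) :
    exp (-s ^ 2) ≤ 8 * π * -log (gaussCDF (-s)) * gaussCDF (-s) ^ 2 := by
  have hs0 : 0 < s := zero_lt_one.trans_le hs
  have hsq : φ s ^ 2 = exp (-s ^ 2) / (2 * π) := by
    rw [gaussianPDFReal_zero_one, mul_pow, inv_pow, sq_sqrt (by positivity), ← exp_nat_mul]
    ring_nf
  have hp2 : s ^ 2 * exp (-s ^ 2) ≤ 2 * π * (1 + s ^ 2) ^ 2 * gaussCDF (-s) ^ 2 := by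
    have h := pow_le_pow_left₀ (mul_nonneg (by positivity) (gaussianPDFReal_nonneg 0 1 s))
      (div_one_add_sq_mul_le_gaussCDF_neg hs0) 2
    rw [mul_pow, div_pow, hsq] at h
    field_simp at h
    linarith
  refine le_of_mul_le_mul_left ?_ (by positivity : 0 < 1 + s ^ 2)
  calc (1 + s ^ 2) * exp (-s ^ 2) ≤ 2 * (s ^ 2 * exp (-s ^ 2)) := by
        nlinarith [mul_le_mul_of_nonneg_right (one_le_pow₀ hs : 1 ≤ s ^ 2) (exp_pos (-s ^ 2)).le]
    _ ≤ (1 + s ^ 2) * (8 * π * ((1 + s ^ 2) / 2) * gaussCDF (-s) ^ 2) := by linarith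
    _ ≤ (1 + s ^ 2) * (8 * π * -log (gaussCDF (-s)) * gaussCDF (-s) ^ 2) := by
        gcongr
        exact one_add_sq_div_two_le_neg_log_gaussCDF_neg hs

lemma rpow_mul_neg_log_le_of_le {γ p q : ℝ} (hγ : 1 ≤ γ) (hp : 0 < p) (hpq : p ≤ q)
    (hq : q ≤ exp (-1)) : p ^ γ * -log p ≤ q ^ γ * -log q := by
  have hq0 : 0 < q := hp.trans_le hpq
  have hqγ : q ^ γ ≤ q := by
    simpa using rpow_le_rpow_of_exponent_ge hq0 (hq.trans (by norm_num [exp_le_one_iff])) hγ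
  have hanti := mul_log_strictAntiOn.antitoneOn
    ⟨(rpow_pos_of_pos hp γ).le, (rpow_le_rpow hp.le hpq (by linarith)).trans (hqγ.trans hq)⟩
    ⟨(rpow_pos_of_pos hq0 γ).le, hqγ.trans hq⟩ (rpow_le_rpow hp.le hpq (by linarith))
  simp only [log_rpow hp, log_rpow hq0] at hanti
  nlinarith

lemma neg_log_rpow_mul_rpow_le {a b p q : ℝ} (ha : 0 ≤ a) (hab : a ≤ b) (hp : 0 < p)
    (hpq : p ≤ q) (hq : q ≤ exp (-1)) : (-log p) ^ a * p ^ b ≤ (-log q) ^ a * q ^ b := by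
  rcases ha.eq_or_lt with rfl | ha
  · simpa using rpow_le_rpow hp.le hpq hab
  have hq0 : 0 < q := hp.trans_le hpq
  have hlog : ∀ x, 0 < x → x ≤ exp (-1) → 0 ≤ -log x := fun x hx hxe => by
    linarith [log_nonpos hx.le (hxe.trans (by norm_num [exp_le_one_iff]))]
  have hsplit : ∀ x, 0 < x → x ≤ exp (-1) →
      (-log x) ^ a * x ^ b = (x ^ (b / a) * -log x) ^ a := fun x hx hxe => by
    rw [mul_rpow (rpow_nonneg hx.le _) (hlog x hx hxe), ← rpow_mul hx.le,
      div_mul_cancel₀ b ha.ne', mul_comm]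
  rw [hsplit p hp (hpq.trans hq), hsplit q hq0 hq]
  exact rpow_le_rpow (mul_nonneg (rpow_nonneg hp.le _) (hlog p hp (hpq.trans hq)))
    (rpow_mul_neg_log_le_of_le ((one_le_div ha).mpr hab) hp hpq hq) ha.le

noncomputable def altitudeTailBound (δ x : ℝ) : ℝ :=
  (2 ^ (1 / (1 - δ)) * √(1 - δ) * (2 * π) ^ (δ / (2 * (1 - δ)))) *
    (-log x) ^ (δ / (2 * (1 - δ))) * x ^ (1 / (1 - δ))

lemma altitudeTailBound_le_of_le {δ p q : ℝ} (hδ0 : 0 ≤ δ) (hδ1 : δ < 1) (hp : 0 < p)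
    (hpq : p ≤ q) (hq : q ≤ exp (-1)) : altitudeTailBound δ p ≤ altitudeTailBound δ q := by
  have hε : 0 < 1 - δ := by linarith
  have hab : δ / (2 * (1 - δ)) ≤ 1 / (1 - δ) := by
    rw [div_le_div_iff₀ (by positivity) hε]; nlinarith
  rw [altitudeTailBound, altitudeTailBound, mul_assoc _ ((-log p) ^ _), mul_assoc _ ((-log q) ^ _)]
  exact mul_le_mul_of_nonneg_left (neg_log_rpow_mul_rpow_le (by positivity) hab hp hpq hq)
    (by positivity)

lemma gaussianPDFReal_zero_one_div_sqrt {δ : ℝ} (hδ1 : δ < 1) (s : ℝ) :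
    φ (s / √(1 - δ)) = φ s * exp (-s ^ 2) ^ (δ / (2 * (1 - δ))) := by
  have hε : 0 < 1 - δ := by linarith
  have h : -(s / √(1 - δ)) ^ 2 / 2 = -s ^ 2 / 2 + -s ^ 2 * (δ / (2 * (1 - δ))) := by
    rw [div_pow, sq_sqrt hε.le]; field_simp; ring
  simp only [gaussianPDFReal_zero_one]
  rw [← exp_mul, h, exp_add]
  ring

lemma gaussCDF_neg_le_altitudeTailBound_gaussCDF {δ t : ℝ} (hδ0 : 0 ≤ δ) (hδ1 : δ < 1)
    (hs : 1 ≤ √(1 - δ) * t) :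
    gaussCDF (-t) ≤ altitudeTailBound δ (gaussCDF (-(√(1 - δ) * t))) := by
  have hε : 0 < 1 - δ := by linarith
  have hε' : 0 < √(1 - δ) := sqrt_pos.mpr hε
  set A := δ / (2 * (1 - δ)) with hA
  set s := √(1 - δ) * t
  set p := gaussCDF (-s)
  have hp : 0 < p := gaussCDF_pos _
  have hs0 : 0 < s := zero_lt_one.trans_le hs
  have ht : t = s / √(1 - δ) := by rw [eq_div_iff hε'.ne', mul_comm]
  have hlog : 0 ≤ -log p := (by positivity : (0 : ℝ) ≤ (1 + s ^ 2) / 2).trans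
    (one_add_sq_div_two_le_neg_log_gaussCDF_neg hs)
  have hpow : 1 / (1 - δ) = 2 * A + 1 := by rw [hA]; field_simp; ring
  calc gaussCDF (-t) ≤ φ t / t := gaussCDF_neg_le_div (by rw [ht]; positivity)
    _ = √(1 - δ) * (φ s / s) * exp (-s ^ 2) ^ A := by
        rw [ht, gaussianPDFReal_zero_one_div_sqrt hδ1, ← hA]; field_simp
    _ ≤ √(1 - δ) * (2 * p) * (8 * π * -log p * p ^ 2) ^ A := by
        gcongr
        · rw [div_le_iff₀ hs0]
          linarith [gaussianPDFReal_zero_one_le_two_mul_gaussCDF_neg hs]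
        · exact exp_neg_sq_le_neg_log_gaussCDF_neg_mul hs
    _ = altitudeTailBound δ p := by
        rw [altitudeTailBound, ← hA, hpow,
          show 8 * π * -log p * p ^ 2 = (2 * π) * -log p * (2 * p) ^ 2 by ring,
          mul_rpow (by positivity) (by positivity), mul_rpow (by positivity) hlog,
          ← rpow_natCast, ← rpow_mul (by positivity), mul_rpow zero_le_two hp.le,
          rpow_add_one two_ne_zero, rpow_add_one hp.ne']
        push_cast
        ring

lemma gaussCDF_neg_le_altitudeTailBound {δ t q : ℝ} (hδ0 : 0 ≤ δ) (hδ1 : δ < 1)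
    (hq : gaussCDF (-(√(1 - δ) * t)) ≤ q) (hq1 : q ≤ gaussCDF (-1)) :
    gaussCDF (-t) ≤ altitudeTailBound δ q := by
  have hs : 1 ≤ √(1 - δ) * t :=
    neg_le_neg_iff.mp (gaussCDF_strictMono.le_iff_le.mp (hq.trans hq1))
  exact (gaussCDF_neg_le_altitudeTailBound_gaussCDF hδ0 hδ1 hs).trans
    (altitudeTailBound_le_of_le hδ0 hδ1 (gaussCDF_pos _) hq
      (hq1.trans gaussCDF_neg_one_le_exp_neg_one))

theorem altitude_training_error_bound_general
    (δ : ℝ≥0)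
    (hδ1 : δ < 1)
    (m σ Ψ pS pSt : ℝ)
    (hlb : gaussCDF (-(Real.sqrt (1 - (δ : ℝ)) * m / σ)) -
      4 / Real.sqrt (1 - (δ : ℝ)) * Real.sqrt Ψ ≤ pSt)
    (hub : pS ≤ gaussCDF (-(m / σ)) + 4 * Real.sqrt Ψ)
    (hsmall : pSt + 4 / Real.sqrt (1 - (δ : ℝ)) * Real.sqrt Ψ ≤ gaussCDF (-1)) :
    pS ≤
      ((2 : ℝ) ^ (1 / (1 - (δ : ℝ))) * Real.sqrt (1 - (δ : ℝ)) *
          (2 * π) ^ ((δ : ℝ) / (2 * (1 - (δ : ℝ))))) *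
        (-Real.log (pSt + 4 / Real.sqrt (1 - (δ : ℝ)) * Real.sqrt Ψ)) ^
          ((δ : ℝ) / (2 * (1 - (δ : ℝ)))) *
        (pSt + 4 / Real.sqrt (1 - (δ : ℝ)) * Real.sqrt Ψ) ^ (1 / (1 - (δ : ℝ))) +
      4 * Real.sqrt Ψ := by
  have hq : gaussCDF (-(√(1 - (δ : ℝ)) * (m / σ))) ≤
      pSt + 4 / Real.sqrt (1 - (δ : ℝ)) * Real.sqrt Ψ := by
    rw [← mul_div_assoc]; linarith
  calc pS ≤ gaussCDF (-(m / σ)) + 4 * √Ψ := hub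
    _ ≤ altitudeTailBound δ (pSt + 4 / √(1 - (δ : ℝ)) * √Ψ) + 4 * √Ψ := by
        gcongr
        exact gaussCDF_neg_le_altitudeTailBound δ.2 (by exact_mod_cast hδ1) hq hsmall

/-- Altitude-training error bound (Theorem 1): with `S = Σ_j w_j Z_j`,
`Z_j ~ Poisson(λ_j)` independent, `S̃ = Σ_j w_j Z̃_j`, `Z̃_j ~ Poisson((1−δ)λ_j)`
independent, `m = E[S] > 0`, `σ² = Var S > 0`,
`Ψ = max_j w_j² / Σ_j λ_j w_j²`, `C = 4`: if the Berry–Esseen inequalities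
`P(S̃ ≤ 0) ≥ Φ(−√(1−δ)·m/σ) − (C/√(1−δ))√Ψ` and `P(S ≤ 0) ≤ Φ(−m/σ) + C√Ψ`
hold and `P(S̃ ≤ 0) + (C/√(1−δ))√Ψ ≤ Φ(−1)`, then
`P(S ≤ 0) ≤ K(δ)·(−log(P(S̃≤0)+(C/√(1−δ))√Ψ))^{δ/(2(1−δ))}
· (P(S̃≤0)+(C/√(1−δ))√Ψ)^{1/(1−δ)} + C√Ψ`
with `K(δ) = 2^{1/(1−δ)}√(1−δ)(2π)^{δ/(2(1−δ))}`. -/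
theorem altitude_training_error_bound
    {Ω : Type*} [MeasurableSpace Ω] (μmeas : Measure Ω) [IsProbabilityMeasure μmeas]
    (d : ℕ) (hd : 0 < d) (lam : Fin d → ℝ≥0) (w : Fin d → ℝ) (δ : ℝ≥0)
    (hδ0 : 0 < δ) (hδ1 : δ < 1)
    (Z : Fin d → Ω → ℕ) (hZmeas : ∀ j, Measurable (Z j))
    (hZindep : iIndepFun Z μmeas)
    (hZdist : ∀ j, Measure.map (Z j) μmeas = poissonMeasure (lam j))
    (Zt : Fin d → Ω → ℕ) (hZtmeas : ∀ j, Measurable (Zt j))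
    (hZtindep : iIndepFun Zt μmeas)
    (hZtdist : ∀ j, Measure.map (Zt j) μmeas = poissonMeasure ((1 - δ) * lam j))
    (S St : Ω → ℝ)
    (hS : S = fun ω => ∑ j, w j * (Z j ω : ℝ))
    (hSt : St = fun ω => ∑ j, w j * (Zt j ω : ℝ))
    (m σ Ψ pS pSt : ℝ)
    (hm : m = ∑ j, (lam j : ℝ) * w j) (hmpos : 0 < m)
    (hσ : σ ^ 2 = ∑ j, (lam j : ℝ) * w j ^ 2) (hσpos : 0 < σ)
    (hΨ : Ψ = (univ.sup' (univ_nonempty_iff.mpr ⟨⟨0, hd⟩⟩) fun j => (w j) ^ 2) /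
      ∑ j, (lam j : ℝ) * w j ^ 2)
    (hpS : pS = (μmeas {ω | S ω ≤ 0}).toReal)
    (hpSt : pSt = (μmeas {ω | St ω ≤ 0}).toReal)
    (hlb : gaussCDF (-(Real.sqrt (1 - (δ : ℝ)) * m / σ)) -
      4 / Real.sqrt (1 - (δ : ℝ)) * Real.sqrt Ψ ≤ pSt)
    (hub : pS ≤ gaussCDF (-(m / σ)) + 4 * Real.sqrt Ψ)
    (hsmall : pSt + 4 / Real.sqrt (1 - (δ : ℝ)) * Real.sqrt Ψ ≤ gaussCDF (-1)) :
    pS ≤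
      ((2 : ℝ) ^ (1 / (1 - (δ : ℝ))) * Real.sqrt (1 - (δ : ℝ)) *
          (2 * π) ^ ((δ : ℝ) / (2 * (1 - (δ : ℝ))))) *
        (-Real.log (pSt + 4 / Real.sqrt (1 - (δ : ℝ)) * Real.sqrt Ψ)) ^
          ((δ : ℝ) / (2 * (1 - (δ : ℝ)))) *
        (pSt + 4 / Real.sqrt (1 - (δ : ℝ)) * Real.sqrt Ψ) ^ (1 / (1 - (δ : ℝ))) +
      4 * Real.sqrt Ψ :=
  altitude_training_error_bound_general δ hδ1 m σ Ψ pS pSt hlb hub hsmall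
end
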